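/- arXiv:1802.05983 — 2 statements merged into one kernel-verified Lean document; each statement's English description precedes it below -/
import Mathlib

section
/- Let μ_1, …, μ_N and ν be probability measures on a measurable space Z with each μ_i absolutely continuous with respect to ν, let μ̄ = (1/N) Σ_{i=1}^N μ_i, and assume all Kullback–Leibler divergences appearing below are finite. Then (1/N) Σ_{i=1}^N KL(μ_i ‖ ν) = (1/N) Σ_{i=1}^N KL(μ_i ‖ μ̄) + KL(μ̄ ‖ ν). (This is the paper's KL decomposition for an empirical data distribution over N points: the average posterior-to-prior KL equals the mutual information term (1/N) Σ_i KL(q(z|x^{(i)}) ‖ q(z)) plus the marginal KL term KL(q(z) ‖ p(z)).) -/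
open MeasureTheory ProbabilityTheory
open scoped ENNReal Classical BigOperators

/-- The Kullback–Leibler divergence between two measures, equal to `∫ log (dμ/dν) dμ`
when `μ ≪ ν` (and this integral is defined), and `+∞` otherwise. -/
noncomputable def klDiv {α : Type*} [MeasurableSpace α] (μ ν : Measure α) : ℝ≥0∞ :=
  if μ ≪ ν ∧ Integrable (llr μ ν) μ then ENNReal.ofReal (∫ x, llr μ ν x ∂μ) else ⊤


open Real in
lemma integral_llr_nonneg' {α : Type*} [MeasurableSpace α] {μ ν : Measure α}
    [IsProbabilityMeasure μ] [IsProbabilityMeasure ν]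
    (hμν : μ ≪ ν) (h_int : Integrable (llr μ ν) μ) :
    0 ≤ ∫ x, llr μ ν x ∂μ := by
  have hint' : Integrable (llr ν μ) μ := (integrable_congr (neg_llr hμν)).mp h_int.neg
  have h1 : ∫ x, llr ν μ x ∂μ ≤ ∫ x, ((ν.rnDeriv μ x).toReal - 1) ∂μ := by
    refine integral_mono_ae hint' (Measure.integrable_toReal_rnDeriv.sub (integrable_const 1)) ?_
    filter_upwards [Measure.rnDeriv_pos' hμν, Measure.rnDeriv_lt_top ν μ]
      with x hpos hlt
    have hto : 0 < (ν.rnDeriv μ x).toReal := ENNReal.toReal_pos hpos.ne' hlt.ne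
    simpa [llr] using log_le_sub_one_of_pos hto
  have h2 : ∫ x, ((ν.rnDeriv μ x).toReal - 1) ∂μ ≤ 0 := by
    rw [integral_sub Measure.integrable_toReal_rnDeriv (integrable_const 1)]
    have := Measure.setIntegral_toReal_rnDeriv_le (μ := ν) (ν := μ) (s := Set.univ)
      (measure_ne_top ν Set.univ)
    simp only [setIntegral_univ] at this
    simp only [integral_const, measure_univ, ENNReal.toReal_one, smul_eq_mul, one_mul]
    simp at this ⊢
    linarith
  have h3 : ∫ x, llr ν μ x ∂μ = - ∫ x, llr μ ν x ∂μ := by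
    rw [← integral_neg]
    exact integral_congr_ae (neg_llr hμν).symm
  linarith [h1.trans h2, h3 ▸ (h1.trans h2)]

lemma klDiv_ne_top_iff {α : Type*} [MeasurableSpace α] {μ ν : Measure α} :
    klDiv μ ν ≠ ⊤ → (μ ≪ ν ∧ Integrable (llr μ ν) μ) := by
  intro h
  by_contra hc
  simp [klDiv, hc] at h

/-- For probability measures `μ 1, …, μ N` and `ν` on `Z` with each `μ i ≪ ν`, and
`μ̄ = (1/N) ∑ i, μ i`, if all KL divergences appearing are finite then
`(1/N) ∑ i, KL(μ i ‖ ν) = (1/N) ∑ i, KL(μ i ‖ μ̄) + KL(μ̄ ‖ ν)`. -/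
theorem kl_decomposition_empirical {Z : Type*} [MeasurableSpace Z]
    (N : ℕ) (hN : 0 < N)
    (μ : Fin N → Measure Z) [∀ i, IsProbabilityMeasure (μ i)]
    (ν : Measure Z) [IsProbabilityMeasure ν]
    (hac : ∀ i, μ i ≪ ν)
    (μbar : Measure Z) (hμbar : μbar = ((N : ℝ≥0∞)⁻¹) • ∑ i, μ i)
    (hfin₁ : ∀ i, klDiv (μ i) ν ≠ ⊤)
    (hfin₂ : ∀ i, klDiv (μ i) μbar ≠ ⊤)
    (hfin₃ : klDiv μbar ν ≠ ⊤) :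
    (1 / N : ℝ) * ∑ i, (klDiv (μ i) ν).toReal
      = (1 / N : ℝ) * ∑ i, (klDiv (μ i) μbar).toReal + (klDiv μbar ν).toReal := by
  have hNne : (N : ℝ≥0∞) ≠ 0 := by exact_mod_cast hN.ne'
  have hNtop : (N : ℝ≥0∞) ≠ ⊤ := ENNReal.natCast_ne_top N
  haveI : IsProbabilityMeasure μbar := by
    constructor
    rw [hμbar]
    simp [Measure.smul_apply, Measure.finset_sum_apply, measure_univ, smul_eq_mul,
      ENNReal.inv_mul_cancel hNne hNtop]
  have h1 := fun i => klDiv_ne_top_iff (hfin₁ i)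
  have h2 := fun i => klDiv_ne_top_iff (hfin₂ i)
  have h3 := klDiv_ne_top_iff hfin₃
  obtain ⟨hbarν, hintbar⟩ := h3
  -- a.e. chain rule for llr
  have hchain : ∀ i, llr (μ i) ν =ᵐ[μ i] fun x => llr (μ i) μbar x + llr μbar ν x := by
    intro i
    have hmul : (μ i).rnDeriv μbar * μbar.rnDeriv ν =ᵐ[ν] (μ i).rnDeriv ν :=
      Measure.rnDeriv_mul_rnDeriv (h2 i).1
    filter_upwards [(hac i).ae_le hmul, Measure.rnDeriv_pos (h2 i).1,
      (h2 i).1.ae_le (Measure.rnDeriv_pos hbarν),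
      (h2 i).1.ae_le (Measure.rnDeriv_lt_top (μ i) μbar),
      (hac i).ae_le (Measure.rnDeriv_lt_top μbar ν)] with x hx hpos1 hpos2 hlt1 hlt2
    simp only [llr, Pi.mul_apply] at hx ⊢
    rw [← hx, ENNReal.toReal_mul]
    exact Real.log_mul (ENNReal.toReal_pos hpos1.ne' hlt1.ne).ne'
      (ENNReal.toReal_pos hpos2.ne' hlt2.ne).ne'
  -- integrability of llr μbar ν w.r.t. μ i
  have hint3 : ∀ i, Integrable (llr μbar ν) (μ i) := by
    intro i
    have : Integrable (fun x => llr (μ i) ν x - llr (μ i) μbar x) (μ i) :=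
      (h1 i).2.sub (h2 i).2
    refine this.congr ?_
    filter_upwards [hchain i] with x hx
    simp [hx]
  have hsplit : ∀ i, ∫ x, llr (μ i) ν x ∂(μ i)
      = ∫ x, llr (μ i) μbar x ∂(μ i) + ∫ x, llr μbar ν x ∂(μ i) := by
    intro i
    rw [integral_congr_ae (hchain i), integral_add (h2 i).2 (hint3 i)]
  -- integral w.r.t. μbar as average
  have havg : ∫ x, llr μbar ν x ∂μbar = (1 / N : ℝ) * ∑ i, ∫ x, llr μbar ν x ∂(μ i) := by
    set f := llr μbar ν with hf
    conv_lhs => rw [hμbar]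
    rw [integral_smul_measure, integral_finset_sum_measure (fun i _ => hint3 i)]
    simp [ENNReal.toReal_inv, one_div]
  -- unfold klDiv and toReal
  have e1 : ∀ i, (klDiv (μ i) ν).toReal = ∫ x, llr (μ i) ν x ∂(μ i) := by
    intro i
    rw [klDiv, if_pos (h1 i)]
    exact ENNReal.toReal_ofReal (integral_llr_nonneg' (h1 i).1 (h1 i).2)
  have e2 : ∀ i, (klDiv (μ i) μbar).toReal = ∫ x, llr (μ i) μbar x ∂(μ i) := by
    intro i
    rw [klDiv, if_pos (h2 i)]
    exact ENNReal.toReal_ofReal (integral_llr_nonneg' (h2 i).1 (h2 i).2)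
  have e3 : (klDiv μbar ν).toReal = ∫ x, llr μbar ν x ∂μbar := by
    rw [klDiv, if_pos ⟨hbarν, hintbar⟩]
    exact ENNReal.toReal_ofReal (integral_llr_nonneg' hbarν hintbar)
  simp only [e1, e2, e3, hsplit, havg]
  rw [Finset.sum_add_distrib, mul_add]
end

section
/- Let q and q̄ be probability measures on ℝ^d having everywhere strictly positive densities f and g with respect to Lebesgue measure, and define D*(z) = f(z)/(f(z)+g(z)). Then for every measurable function D : ℝ^d → (0,1), the discriminator objective satisfies ∫ log D(z) dq(z) + ∫ log(1 − D(z)) dq̄(z) ≤ ∫ log D*(z) dq(z) + ∫ log(1 − D*(z)) dq̄(z); that is, D* maximizes the binary cross-entropy discrimination objective between samples from q and samples from q̄ over all measurable discriminators. -/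
open MeasureTheory
open scoped ENNReal

lemma key_ineq (a b t : ℝ) (ha : 0 < a) (hb : 0 < b) (ht0 : 0 < t) (ht1 : t < 1) :
    a * (-Real.log (a / (a + b))) + b * (-Real.log (1 - a / (a + b)))
      ≤ a * (-Real.log t) + b * (-Real.log (1 - t)) := by
  have hab : 0 < a + b := by linarith
  have hs : (1 : ℝ) - a / (a + b) = b / (a + b) := by field_simp; ring
  rw [hs]
  have hcon : ConcaveOn ℝ (Set.Ioi 0) Real.log := strictConcaveOn_log_Ioi.concaveOn
  have ht1' : (0:ℝ) < 1 - t := by linarith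
  have hx : t / (a / (a + b)) ∈ Set.Ioi (0:ℝ) := Set.mem_Ioi.2 (by positivity)
  have hy : (1 - t) / (b / (a + b)) ∈ Set.Ioi (0:ℝ) := Set.mem_Ioi.2 (by positivity)
  have hw1 : (0:ℝ) ≤ a / (a + b) := by positivity
  have hw2 : (0:ℝ) ≤ b / (a + b) := by positivity
  have hsum : a / (a + b) + b / (a + b) = 1 := by field_simp
  have hc := hcon.2 hx hy hw1 hw2 hsum
  have hxt : a / (a + b) * (t / (a / (a + b))) = t := by field_simp; try ring
  have hyt : b / (a + b) * ((1 - t) / (b / (a + b))) = 1 - t := by field_simp; try ring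
  rw [smul_eq_mul, smul_eq_mul, smul_eq_mul, smul_eq_mul, hxt, hyt] at hc
  have h1 : t + (1 - t) = 1 := by ring
  rw [h1, Real.log_one] at hc
  rw [show t / (a / (a + b)) = t * ((a+b)/a) by field_simp; try ring,
      show (1 - t) / (b / (a + b)) = (1-t) * ((a+b)/b) by field_simp; try ring,
      Real.log_mul (ne_of_gt ht0) (by positivity),
      Real.log_mul (by linarith) (by positivity),
      Real.log_div hab.ne' ha.ne', Real.log_div hab.ne' hb.ne'] at hc
  rw [Real.log_div ha.ne' hab.ne', Real.log_div hb.ne' hab.ne']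
  have hd := hc
  have h2 := mul_nonneg (le_of_lt hab) (neg_nonneg.2 hd)
  have hne : a + b ≠ 0 := hab.ne'
  field_simp at h2
  nlinarith [h2]


/-- The discriminator `D*(z) = f(z)/(f(z)+g(z))` maximizes the binary cross-entropy
discrimination objective `V(D) = E_q[log D] + E_q̄[log (1-D)]` over all measurable
discriminators `D : ℝᵈ → (0,1)`, where `q` and `q̄` are probability measures on `ℝᵈ` with
everywhere positive Lebesgue densities `f` and `g`.  Since each term of `V(D)` is `≤ 0`, the
objective is formalized in the extended reals via the (nonnegative) lower integrals of the
negated logarithms:  `V(D) ≤ V(D*)` reads `-V(D*) ≤ -V(D)` below. -/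
theorem optimal_discriminator (d : ℕ)
    (f g : (Fin d → ℝ) → ℝ) (hf_meas : Measurable f) (hg_meas : Measurable g)
    (hf_pos : ∀ z, 0 < f z) (hg_pos : ∀ z, 0 < g z)
    (q qbar : Measure (Fin d → ℝ))
    [IsProbabilityMeasure q] [IsProbabilityMeasure qbar]
    (hq : q = volume.withDensity fun z => ENNReal.ofReal (f z))
    (hqbar : qbar = volume.withDensity fun z => ENNReal.ofReal (g z))
    (Dstar : (Fin d → ℝ) → ℝ) (hDstar : ∀ z, Dstar z = f z / (f z + g z)) :
    ∀ D : (Fin d → ℝ) → ℝ, Measurable D → (∀ z, D z ∈ Set.Ioo (0 : ℝ) 1) →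
      (∫⁻ z, ENNReal.ofReal (-Real.log (Dstar z)) ∂q)
          + ∫⁻ z, ENNReal.ofReal (-Real.log (1 - Dstar z)) ∂qbar
        ≤ (∫⁻ z, ENNReal.ofReal (-Real.log (D z)) ∂q)
          + ∫⁻ z, ENNReal.ofReal (-Real.log (1 - D z)) ∂qbar := by
  intro D hD_meas hD01
  have hDs : Dstar = fun z => f z / (f z + g z) := funext hDstar
  subst hDs hq hqbar
  have hf_m : Measurable fun z => ENNReal.ofReal (f z) := hf_meas.ennreal_ofReal
  have hg_m : Measurable fun z => ENNReal.ofReal (g z) := hg_meas.ennreal_ofReal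
  have hDs_meas : Measurable fun z => f z / (f z + g z) :=
    hf_meas.div (hf_meas.add hg_meas)
  have m1 : Measurable fun z => ENNReal.ofReal (-Real.log (f z / (f z + g z))) :=
    (hDs_meas.log.neg).ennreal_ofReal
  have m2 : Measurable fun z => ENNReal.ofReal (-Real.log (1 - f z / (f z + g z))) :=
    ((measurable_const.sub hDs_meas).log.neg).ennreal_ofReal
  have m3 : Measurable fun z => ENNReal.ofReal (-Real.log (D z)) :=
    (hD_meas.log.neg).ennreal_ofReal
  have m4 : Measurable fun z => ENNReal.ofReal (-Real.log (1 - D z)) :=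
    ((measurable_const.sub hD_meas).log.neg).ennreal_ofReal
  rw [lintegral_withDensity_eq_lintegral_mul _ hf_m m1,
      lintegral_withDensity_eq_lintegral_mul _ hg_m m2,
      lintegral_withDensity_eq_lintegral_mul _ hf_m m3,
      lintegral_withDensity_eq_lintegral_mul _ hg_m m4]
  simp only [Pi.mul_apply]
  rw [← lintegral_add_left (f := fun z => ENNReal.ofReal (f z) * ENNReal.ofReal (-Real.log (f z / (f z + g z)))) (hf_m.mul m1),
    ← lintegral_add_left (f := fun z => ENNReal.ofReal (f z) * ENNReal.ofReal (-Real.log (D z))) (hf_m.mul m3)]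
  refine lintegral_mono fun z => ?_
  obtain ⟨ht0, ht1⟩ := hD01 z
  have ha := hf_pos z
  have hb := hg_pos z
  have hab : (0:ℝ) < f z + g z := by linarith
  have hs0 : 0 < f z / (f z + g z) := by positivity
  have hs1 : f z / (f z + g z) < 1 := by
    rw [div_lt_one hab]; linarith
  have l1 : 0 ≤ -Real.log (f z / (f z + g z)) :=
    neg_nonneg.2 (Real.log_nonpos hs0.le hs1.le)
  have l2 : 0 ≤ -Real.log (1 - f z / (f z + g z)) :=
    neg_nonneg.2 (Real.log_nonpos (by linarith) (by linarith))
  have l3 : 0 ≤ -Real.log (D z) := neg_nonneg.2 (Real.log_nonpos ht0.le ht1.le)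
  have l4 : 0 ≤ -Real.log (1 - D z) :=
    neg_nonneg.2 (Real.log_nonpos (by linarith) (by linarith))
  rw [← ENNReal.ofReal_mul ha.le, ← ENNReal.ofReal_mul hb.le,
      ← ENNReal.ofReal_mul ha.le, ← ENNReal.ofReal_mul hb.le,
      ← ENNReal.ofReal_add (mul_nonneg ha.le l1) (mul_nonneg hb.le l2),
      ← ENNReal.ofReal_add (mul_nonneg ha.le l3) (mul_nonneg hb.le l4)]
  exact ENNReal.ofReal_le_ofReal (key_ineq (f z) (g z) (D z) ha hb ht0 ht1)
end
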